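/- arXiv:2301.06107 — 2 statements merged into one kernel-verified Lean document; each statement's English description precedes it below -/
import Mathlib

section
/- Let N, n, d be positive integers with n ≤ N and d ≤ N, let α > 0, λ ≥ 0, ε ≥ 0 be real numbers, let U ∈ ℂ^{N×N} be a unitary matrix, and let A ∈ ℂ^{n×d}. Suppose that ‖A − α·U[1..n, 1..d]‖ ≤ ε, where U[1..n, 1..d] denotes the submatrix of U consisting of its first n rows and first d columns and ‖·‖ is the ℓ²-operator norm. Let Ã ∈ ℂ^{(n+d)×d} be the block matrix whose top n×d block is A and whose bottom d×d block is λ I_d. Then there exists a unitary matrix W ∈ ℂ^{4N×4N} such that ‖Ã − (α+λ)·W[1..n+d, 1..d]‖ ≤ ε. -/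
/-!
Put `p = α / (α + λ)` and `q = λ / (α + λ)`. Up to rescaling by `α + λ`, the matrix `Ã` is the
convex combination `p • [U₀; 0] + q • [0; I_d]` (with `U₀` the top-left `n × d` block of `U`), and
both summands are corners of unitaries on `Fin N ⊕ Fin N`: of `diag(U, 1)` and of the swap of the two
halves. A convex combination `p • V₁ + q • V₂` of unitaries is the top-left block of the unitary
`Q* diag(V₁, V₂) Q`, where `Q` is the rotation with cosine `√p` and sine `√q`. Rows and columns may
be permuted independently without losing unitarity, so the corner can be moved to the first
`n + d` rows and `d` columns of `Fin (4 * N)`; the error matrix is then `A - α U₀` padded with zero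
rows, whose operator norm is at most `ε`.
-/

open Matrix

/-- The ℓ²-operator norm of a complex matrix. -/
noncomputable def l2OpNorm {m n : ℕ} (M : Matrix (Fin m) (Fin n) ℂ) : ℝ :=
  ‖LinearMap.toContinuousLinearMap (Matrix.toEuclideanLin M)‖

theorem Equiv.exists_extending_pair {α β γ : Type*} [Fintype α] [Fintype β] [Finite γ]
    (h : Fintype.card α = Fintype.card β) {a : γ → α} {f : γ → β}
    (ha : a.Injective) (hf : f.Injective) : ∃ e : α ≃ β, ∀ c, e (a c) = f c := by
  let e₀ := Fintype.equivOfCardEq h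
  obtain ⟨σ, hσ⟩ := Perm.exists_extending_pair (e₀ ∘ a) f (e₀.injective.comp ha) hf
  exact ⟨e₀.trans σ, hσ⟩

namespace Matrix

variable {κ ι R 𝕜 : Type*} [Fintype κ] [DecidableEq κ] [Fintype ι] [DecidableEq ι]
  [CommRing R] [StarRing R] [RCLike 𝕜]

theorem submatrix_mem_unitaryGroup {M : Matrix κ κ R} (hM : M ∈ unitaryGroup κ R)
    (e f : ι ≃ κ) : M.submatrix e f ∈ unitaryGroup ι R := by
  rw [mem_unitaryGroup_iff] at hM ⊢
  rw [star_eq_conjTranspose, conjTranspose_submatrix, submatrix_mul_equiv, ← star_eq_conjTranspose,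
    hM, submatrix_one_equiv]

theorem fromBlocks_mem_unitaryGroup {X Y : Matrix κ κ R} (hX : X ∈ unitaryGroup κ R)
    (hY : Y ∈ unitaryGroup κ R) : fromBlocks X 0 0 Y ∈ unitaryGroup (κ ⊕ κ) R := by
  rw [mem_unitaryGroup_iff] at hX hY ⊢
  rw [star_eq_conjTranspose, fromBlocks_conjTranspose, fromBlocks_multiply]
  simp [← star_eq_conjTranspose, hX, hY]

theorem fromBlocks_rotation_mem_unitaryGroup {s t : ℝ} (hst : s ^ 2 + t ^ 2 = 1) :
    fromBlocks ((s : 𝕜) • 1) (-((t : 𝕜) • 1)) ((t : 𝕜) • 1) ((s : 𝕜) • 1)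
      ∈ unitaryGroup (κ ⊕ κ) 𝕜 := by
  have hst' : (s : 𝕜) * s + t * t = 1 := by exact_mod_cast (by linear_combination hst)
  rw [mem_unitaryGroup_iff, star_eq_conjTranspose, fromBlocks_conjTranspose, fromBlocks_multiply,
    ← fromBlocks_one]
  simp only [conjTranspose_smul, conjTranspose_neg, conjTranspose_one, RCLike.star_def,
    RCLike.conj_ofReal, smul_mul_smul_comm, mul_one, neg_mul, mul_neg, neg_neg]
  congr 1
  all_goals first | module | linear_combination (norm := module) hst' • (1 : Matrix κ κ 𝕜)

theorem exists_mem_unitaryGroup_toBlocks₁₁_eq_smul_add_smul {V₁ V₂ : Matrix κ κ 𝕜}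
    (h₁ : V₁ ∈ unitaryGroup κ 𝕜) (h₂ : V₂ ∈ unitaryGroup κ 𝕜) {p q : ℝ} (hp : 0 ≤ p) (hq : 0 ≤ q)
    (hpq : p + q = 1) :
    ∃ W ∈ unitaryGroup (κ ⊕ κ) 𝕜, W.toBlocks₁₁ = (p : 𝕜) • V₁ + (q : 𝕜) • V₂ := by
  set Q : Matrix (κ ⊕ κ) (κ ⊕ κ) 𝕜 :=
    fromBlocks ((√p : 𝕜) • 1) (-((√q : 𝕜) • 1)) ((√q : 𝕜) • 1) ((√p : 𝕜) • 1)
  have hQ : Q ∈ unitaryGroup (κ ⊕ κ) 𝕜 :=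
    fromBlocks_rotation_mem_unitaryGroup (by rw [Real.sq_sqrt hp, Real.sq_sqrt hq, hpq])
  refine ⟨star Q * fromBlocks V₁ 0 0 V₂ * Q,
    mul_mem (mul_mem (Unitary.star_mem hQ) (fromBlocks_mem_unitaryGroup h₁ h₂)) hQ, ?_⟩
  rw [star_eq_conjTranspose, fromBlocks_conjTranspose, fromBlocks_multiply, fromBlocks_multiply,
    toBlocks_fromBlocks₁₁]
  simp [smul_smul, Real.mul_self_sqrt hp, Real.mul_self_sqrt hq]

end Matrix

theorem l2OpNorm_le_of_castAdd_eq_of_natAdd_eq_zero {n k d : ℕ}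
    {M : Matrix (Fin (n + k)) (Fin d) ℂ} {B : Matrix (Fin n) (Fin d) ℂ} (htop : ∀ i, M (Fin.castAdd k i) = B i)
    (hbot : ∀ i, M (Fin.natAdd n i) = 0) : l2OpNorm M ≤ l2OpNorm B := by
  refine ContinuousLinearMap.opNorm_le_bound _ (norm_nonneg _) fun x => ?_
  refine le_of_eq_of_le ?_ ((LinearMap.toContinuousLinearMap (toEuclideanLin B)).le_opNorm x)
  simp only [LinearMap.coe_toContinuousLinearMap', EuclideanSpace.norm_eq, toLpLin_apply]
  rw [Fin.sum_univ_add]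
  simp [mulVec, htop, hbot]

theorem stmt_1 (N n d : ℕ)
    (hnN : n ≤ N) (hdN : d ≤ N)
    (α lam ε : ℝ) (hα : 0 < α) (hlam : 0 ≤ lam)
    (U : Matrix (Fin N) (Fin N) ℂ) (hU : U ∈ Matrix.unitaryGroup (Fin N) ℂ)
    (A : Matrix (Fin n) (Fin d) ℂ)
    (hBE : l2OpNorm (A - (α : ℂ) • U.submatrix (Fin.castLE hnN) (Fin.castLE hdN)) ≤ ε) :
    ∃ W : Matrix (Fin (4 * N)) (Fin (4 * N)) ℂ,
      W ∈ Matrix.unitaryGroup (Fin (4 * N)) ℂ ∧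
      l2OpNorm
        ((Matrix.of fun (i : Fin (n + d)) (j : Fin d) =>
            if h : (i : ℕ) < n then A ⟨i, h⟩ j
            else if (i : ℕ) = n + (j : ℕ) then (lam : ℂ) else 0)
          - ((α : ℂ) + (lam : ℂ)) •
              W.submatrix (Fin.castLE (by omega : n + d ≤ 4 * N))
                (Fin.castLE (by omega : d ≤ 4 * N))) ≤ ε := by
  have hsum : 0 < α + lam := by linarith
  obtain ⟨W, hW, hcorner⟩ := exists_mem_unitaryGroup_toBlocks₁₁_eq_smul_add_smul
    (fromBlocks_mem_unitaryGroup hU (one_mem _))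
    (submatrix_mem_unitaryGroup (one_mem _) (Equiv.sumComm (Fin N) (Fin N)) (Equiv.refl _))
    (div_nonneg hα.le hsum.le) (div_nonneg hlam hsum.le) (by field_simp)
  have hcard : Fintype.card (Fin (4 * N)) = Fintype.card ((Fin N ⊕ Fin N) ⊕ (Fin N ⊕ Fin N)) := by
    simp only [Fintype.card_fin, Fintype.card_sum]; ring
  -- Rows `i < n` of `Ã` go to the rows of `U`, rows `n + k` to the second half of `Fin N ⊕ Fin N`.
  obtain ⟨eRow, heRow⟩ := Equiv.exists_extending_pair hcard
    (Fin.castLE_injective (by omega : n + d ≤ 4 * N))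
    (Sum.inl_injective.comp ((Sum.map_injective.2 ⟨Fin.castLE_injective hnN,
      Fin.castLE_injective hdN⟩).comp finSumFinEquiv.symm.injective))
  obtain ⟨eCol, heCol⟩ := Equiv.exists_extending_pair hcard
    (Fin.castLE_injective (by omega : d ≤ 4 * N))
    ((Sum.inl_injective.comp Sum.inl_injective).comp (Fin.castLE_injective hdN))
  have hne : (α : ℂ) + lam ≠ 0 := by exact_mod_cast hsum.ne'
  have hentry (x y) : W (.inl x) (.inl y) = W.toBlocks₁₁ x y := rfl
  refine ⟨W.submatrix eRow eCol, submatrix_mem_unitaryGroup hW eRow eCol,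
    le_trans (l2OpNorm_le_of_castAdd_eq_of_natAdd_eq_zero (fun i => ?_) (fun i => ?_)) hBE⟩
  all_goals
    ext j
    simp [heRow, heCol, hentry, hcorner, one_apply, Fin.val_inj, ← mul_assoc, mul_div_cancel₀ _ hne]
end

section
/- Let δ ∈ (0, 1/3] and ε ∈ (0, 1/2] be real numbers, and let P : ℝ → ℝ be a polynomial function such that |P(x)| ≤ 1 for all x ∈ [−2, 2] and |P(x) − sign(x)| ≤ ε for all x ∈ [−2, −δ] ∪ [δ, 2]. Define Q(x) = (1−ε)·(P(x + 2δ) − P(−x + 2δ))/2. Then: (i) Q(−x) = −Q(x) for all x ∈ ℝ (Q is odd); (ii) |Q(x)| ≤ 1 for all x ∈ [−1, 1]; (iii) |Q(x) − sign(x)| ≤ 2ε for all x ∈ [−1, −3δ] ∪ [3δ, 1]; and (iv) |Q(x)| ≤ 2ε for all x ∈ [−δ, δ]. -/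
theorem stmt_2 (δ ε : ℝ) (hδ : δ ∈ Set.Ioc (0 : ℝ) (1 / 3)) (hε : ε ∈ Set.Ioc (0 : ℝ) (1 / 2))
    (P : Polynomial ℝ)
    (hP₁ : ∀ x ∈ Set.Icc (-2 : ℝ) 2, |P.eval x| ≤ 1)
    (hP₂ : ∀ x ∈ Set.Icc (-2 : ℝ) (-δ) ∪ Set.Icc δ 2, |P.eval x - Real.sign x| ≤ ε)
    (Q : ℝ → ℝ)
    (hQ : ∀ x, Q x = (1 - ε) * (P.eval (x + 2 * δ) - P.eval (-x + 2 * δ)) / 2) :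
    (∀ x : ℝ, Q (-x) = -Q x) ∧
      (∀ x ∈ Set.Icc (-1 : ℝ) 1, |Q x| ≤ 1) ∧
      (∀ x ∈ Set.Icc (-1 : ℝ) (-(3 * δ)) ∪ Set.Icc (3 * δ) 1, |Q x - Real.sign x| ≤ 2 * ε) ∧
      (∀ x ∈ Set.Icc (-δ) δ, |Q x| ≤ 2 * ε) := by
  obtain ⟨hδ0, hδ3⟩ := hδ
  obtain ⟨hε0, hε2⟩ := hε
  have hodd : ∀ x : ℝ, Q (-x) = -Q x := by
    intro x
    rw [hQ, hQ, neg_neg]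
    ring
  have hpos : ∀ x ∈ Set.Icc (3 * δ) 1, |Q x - Real.sign x| ≤ 2 * ε := by
    intro x hx
    obtain ⟨hx1, hx2⟩ := hx
    have hs : Real.sign x = 1 := Real.sign_of_pos (by linarith)
    have h1 := hP₂ (x + 2 * δ) (Or.inr ⟨by linarith, by linarith⟩)
    have h2 := hP₂ (-x + 2 * δ) (Or.inl ⟨by linarith, by linarith⟩)
    rw [Real.sign_of_pos (by linarith : (0:ℝ) < x + 2 * δ)] at h1
    rw [Real.sign_of_neg (by linarith : -x + 2 * δ < 0)] at h2
    obtain ⟨a1, a2⟩ := abs_le.mp h1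
    obtain ⟨b1, b2⟩ := abs_le.mp h2
    rw [hQ, hs, abs_le]
    constructor <;> nlinarith
  refine ⟨hodd, ?_, ?_, ?_⟩
  · intro x hx
    obtain ⟨hx1, hx2⟩ := hx
    have h1 := hP₁ (x + 2 * δ) ⟨by linarith, by linarith⟩
    have h2 := hP₁ (-x + 2 * δ) ⟨by linarith, by linarith⟩
    obtain ⟨a1, a2⟩ := abs_le.mp h1
    obtain ⟨b1, b2⟩ := abs_le.mp h2
    rw [hQ, abs_le]
    constructor <;> nlinarith
  · intro x hx
    rcases hx with h | h
    · obtain ⟨hx1, hx2⟩ := h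
      have := hpos (-x) ⟨by linarith, by linarith⟩
      have hsx : Real.sign x = -1 := Real.sign_of_neg (by linarith)
      rw [hodd x, Real.sign_of_pos (by linarith : (0:ℝ) < -x)] at this
      rw [hsx]
      calc |Q x - (-1)| = |-(Q x - (-1))| := (abs_neg _).symm
        _ = |-Q x - 1| := by ring_nf
        _ ≤ 2 * ε := this
    · exact hpos x h
  · intro x hx
    obtain ⟨hx1, hx2⟩ := hx
    have h1 := hP₂ (x + 2 * δ) (Or.inr ⟨by linarith, by linarith⟩)
    have h2 := hP₂ (-x + 2 * δ) (Or.inr ⟨by linarith, by linarith⟩)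
    rw [Real.sign_of_pos (by linarith : (0:ℝ) < x + 2 * δ)] at h1
    rw [Real.sign_of_pos (by linarith : (0:ℝ) < -x + 2 * δ)] at h2
    obtain ⟨a1, a2⟩ := abs_le.mp h1
    obtain ⟨b1, b2⟩ := abs_le.mp h2
    rw [hQ, abs_le]
    constructor <;> nlinarith
end
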